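/- arXiv:hep-ph/9306290 — 4 statements merged into one kernel-verified Lean document; each statement's English description precedes it below -/
import Mathlib

section
/- Assume M₁ ≥ 0, M₂ ≥ 0, M_φ² ≥ 0, |M′²| ≤ M₁·M₂ and |μ²| ≤ M_φ². Then V₀(Δ, Δbar, Δc, Δbarc, κ, κ′) ≥ 0 for every choice of 2×2 complex matrices Δ, Δbar, Δc, Δbarc and complex numbers κ, κ′ (where M₁² and M₂² in V₀ are the squares of M₁ and M₂). -/
open Matrix

/-- The Pauli matrices `τ₁, τ₂, τ₃`. -/
noncomputable def pauli : Fin 3 → Matrix (Fin 2) (Fin 2) ℂ :=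
  ![!![0, 1; 1, 0], !![0, -Complex.I; Complex.I, 0], !![1, 0; 0, -1]]

/-- The diagonal bidoublet VEV `Φ = diag(κ, κ')`. -/
noncomputable def PhiM (κ κ' : ℂ) : Matrix (Fin 2) (Fin 2) ℂ := !![κ, 0; 0, κ']

/-- The tree-level Higgs potential of the minimal SUSY left-right model with vanishing
slepton fields, in terms of the triplet fields `Δ, Δbar, Δc, Δbarc` and the diagonal
bidoublet entries `κ, κ'`.  The parameters `M1sq, M2sq, Mpsq (= M′²), Mphisq, musq`
are arbitrary reals and `g, g'` are the gauge couplings. -/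
noncomputable def V0 (M1sq M2sq Mpsq Mphisq musq g g' : ℝ)
    (Δ Δbar Δc Δbarc : Matrix (Fin 2) (Fin 2) ℂ) (κ κ' : ℂ) : ℝ :=
  M1sq * ((Δᴴ * Δ).trace + (Δcᴴ * Δc).trace).re
  + M2sq * ((Δbarᴴ * Δbar).trace + (Δbarcᴴ * Δbarc).trace).re
  + 2 * Mpsq * ((Δ * Δbar).trace + (Δc * Δbarc).trace).re
  + Mphisq * (‖κ‖ ^ 2 + ‖κ'‖ ^ 2)
  + 2 * musq * (κ * κ').re
  + g ^ 2 / 8 * ∑ m : Fin 3,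
      ‖((2 : ℂ) • (Δᴴ * pauli m * Δ) + (2 : ℂ) • (Δbarᴴ * pauli m * Δbar)
        + (PhiM κ κ')ᴴ * pauli m * PhiM κ κ').trace‖ ^ 2
  + g ^ 2 / 8 * ∑ m : Fin 3,
      ‖((2 : ℂ) • (Δcᴴ * pauli m * Δc) + (2 : ℂ) • (Δbarcᴴ * pauli m * Δbarc)
        + PhiM κ κ' * (pauli m)ᵀ * (PhiM κ κ')ᴴ).trace‖ ^ 2
  + g' ^ 2 / 8 * ‖(2 : ℂ) * ((Δᴴ * Δ).trace - (Δcᴴ * Δc).trace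
      - (Δbarᴴ * Δbar).trace + (Δbarcᴴ * Δbarc).trace)‖ ^ 2

/-!
Each soft-mass block of `V₀` has the form `P a + Q b + 2 m c` with `P, Q ≥ 0`, `m² ≤ P Q`
(the hypotheses on the masses) and `a, b ≥ 0`, `c² ≤ a b` (Cauchy–Schwarz for the Frobenius
inner product `tr (Aᴴ B)`, resp. for `|κ κ'| = |κ| |κ'|`); such an expression is nonnegative
because both symmetric matrices `[[P, m], [m, Q]]` and `[[a, c], [c, b]]` are positive
semidefinite. The `D`-terms are sums of squares.
-/

lemma mul_add_mul_add_two_mul_mul_nonneg {R : Type*} [CommRing R] [LinearOrder R]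
    [IsStrictOrderedRing R] {P Q m a b c : R} (hP : 0 ≤ P) (hQ : 0 ≤ Q) (hm : m ^ 2 ≤ P * Q)
    (ha : 0 ≤ a) (hb : 0 ≤ b) (hc : c ^ 2 ≤ a * b) : 0 ≤ P * a + Q * b + 2 * m * c := by
  have hsum : 0 ≤ P * a + Q * b := by positivity
  have hdet : m ^ 2 * c ^ 2 ≤ (P * Q) * (a * b) := mul_le_mul hm hc (sq_nonneg c) (by positivity)
  have hsq : (2 * m * c) ^ 2 ≤ (P * a + Q * b) ^ 2 := by
    nlinarith [sq_nonneg (P * a - Q * b)]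
  linarith [(abs_le_of_sq_le_sq' hsq hsum).1]

section FrobeniusInner

variable {𝕜 : Type*} [RCLike 𝕜] {m n : Type*} [Fintype m] [Fintype n]

lemma Matrix.trace_conjTranspose_mul_eq_inner (A B : Matrix m n 𝕜) :
    (Aᴴ * B).trace =
      inner 𝕜 (WithLp.toLp 2 (vec A) : EuclideanSpace 𝕜 (n × m)) (WithLp.toLp 2 (vec B)) := by
  rw [EuclideanSpace.inner_eq_star_dotProduct, dotProduct_comm, ← star_vec_dotProduct_vec]

lemma Matrix.re_trace_conjTranspose_mul_self_nonneg (A : Matrix m n 𝕜) :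
    0 ≤ RCLike.re (Aᴴ * A).trace := by
  rw [trace_conjTranspose_mul_eq_inner, inner_self_eq_norm_sq]
  positivity

lemma Matrix.sq_re_trace_conjTranspose_mul_le (A B : Matrix m n 𝕜) :
    RCLike.re (Aᴴ * B).trace ^ 2 ≤ RCLike.re (Aᴴ * A).trace * RCLike.re (Bᴴ * B).trace := by
  simp only [trace_conjTranspose_mul_eq_inner, inner_self_eq_norm_sq, ← mul_pow]
  rw [← sq_abs]
  gcongr
  exact (RCLike.abs_re_le_norm _).trans (norm_inner_le_norm _ _)

lemma Matrix.sq_re_trace_mul_le (A : Matrix m n 𝕜) (B : Matrix n m 𝕜) :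
    RCLike.re (A * B).trace ^ 2 ≤ RCLike.re (Aᴴ * A).trace * RCLike.re (Bᴴ * B).trace := by
  simpa only [conjTranspose_conjTranspose, trace_mul_comm A Aᴴ]
    using sq_re_trace_conjTranspose_mul_le Aᴴ B

end FrobeniusInner

lemma Complex.sq_re_mul_le (z w : ℂ) : (z * w).re ^ 2 ≤ ‖z‖ ^ 2 * ‖w‖ ^ 2 := by
  rw [← mul_pow, ← norm_mul, ← sq_abs]
  gcongr
  exact abs_re_le_norm _

lemma Matrix.re_trace_mass_form_nonneg {m n : Type*} [Fintype m] [Fintype n] {P Q M : ℝ}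
    (hP : 0 ≤ P) (hQ : 0 ≤ Q) (hM : M ^ 2 ≤ P * Q) (A : Matrix m n ℂ) (B : Matrix n m ℂ) :
    0 ≤ P * (Aᴴ * A).trace.re + Q * (Bᴴ * B).trace.re + 2 * M * (A * B).trace.re :=
  mul_add_mul_add_two_mul_mul_nonneg hP hQ hM (re_trace_conjTranspose_mul_self_nonneg A)
    (re_trace_conjTranspose_mul_self_nonneg B) (sq_re_trace_mul_le A B)

theorem V0_nonneg_general (M1 M2 Mpsq Mphisq musq g g' : ℝ)
    (h3 : 0 ≤ Mphisq)
    (h4 : |Mpsq| ≤ M1 * M2) (h5 : |musq| ≤ Mphisq) :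
    ∀ (Δ Δbar Δc Δbarc : Matrix (Fin 2) (Fin 2) ℂ) (κ κ' : ℂ),
      0 ≤ V0 (M1 ^ 2) (M2 ^ 2) Mpsq Mphisq musq g g' Δ Δbar Δc Δbarc κ κ' := by
  intro Δ Δbar Δc Δbarc κ κ'
  have hM : Mpsq ^ 2 ≤ M1 ^ 2 * M2 ^ 2 := by
    rw [← mul_pow, ← sq_abs]
    exact pow_le_pow_left₀ (abs_nonneg _) h4 2
  have hμ : musq ^ 2 ≤ Mphisq * Mphisq := by
    rw [← sq, ← sq_abs]
    exact pow_le_pow_left₀ (abs_nonneg _) h5 2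
  have hL := re_trace_mass_form_nonneg (sq_nonneg M1) (sq_nonneg M2) hM Δ Δbar
  have hR := re_trace_mass_form_nonneg (sq_nonneg M1) (sq_nonneg M2) hM Δc Δbarc
  have hΦ := mul_add_mul_add_two_mul_mul_nonneg h3 h3 hμ (sq_nonneg ‖κ‖) (sq_nonneg ‖κ'‖)
    (Complex.sq_re_mul_le κ κ')
  simp only [V0, Complex.add_re]
  refine add_nonneg (add_nonneg (add_nonneg ?_ (by positivity)) (by positivity)) (by positivity)
  linarith

/-- If `M₁ ≥ 0`, `M₂ ≥ 0`, `M_φ² ≥ 0`, `|M′²| ≤ M₁M₂` and `|μ²| ≤ M_φ²`, then the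
tree-level Higgs potential (with `M₁², M₂²` the squares of `M₁, M₂`) is nonnegative
for every field configuration. -/
theorem V0_nonneg (M1 M2 Mpsq Mphisq musq g g' : ℝ)
    (h1 : 0 ≤ M1) (h2 : 0 ≤ M2) (h3 : 0 ≤ Mphisq)
    (h4 : |Mpsq| ≤ M1 * M2) (h5 : |musq| ≤ Mphisq) :
    ∀ (Δ Δbar Δc Δbarc : Matrix (Fin 2) (Fin 2) ℂ) (κ κ' : ℂ),
      0 ≤ V0 (M1 ^ 2) (M2 ^ 2) Mpsq Mphisq musq g g' Δ Δbar Δc Δbarc κ κ' :=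
  V0_nonneg_general M1 M2 Mpsq Mphisq musq g g' h3 h4 h5
end

section
/- Assume M₁ > 0, M₂ > 0, M_φ² > 0, |M′²| < M₁·M₂ and |μ²| < M_φ² (with M₁² and M₂² in V₀ the squares of M₁ and M₂). Then V₀(Δ, Δbar, Δc, Δbarc, κ, κ′) = 0 if and only if Δ = Δbar = Δc = Δbarc = 0 and κ = κ′ = 0. Consequently the absolute minimum of V₀ is attained exactly at the trivial, parity-conserving configuration in which all triplet and bidoublet fields vanish. -/
open Matrix

/-! The D-terms of `V0` are sums of squares. What remains splits into one quadratic form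
`A|a|² + B|b|² + 2c Re(ab)` for each entry pair `(Δ i j, Δbar j i)`, `(Δc i j, Δbarc j i)` and
for `(κ, κ')`. Since `|Re(ab)| ≤ |a||b|`, completing the square gives
`A · (A|a|² + B|b|² + 2c Re(ab)) ≥ (A|a| - |c||b|)² + (AB - c²)|b|²`,
so each form is positive definite once `A ≥ 0` and `c² < AB`: for the triplets this is
`(M′²)² < M₁²M₂²`, for the bidoublet `(μ²)² < (M_φ²)²`. -/

noncomputable def pairForm (A B c : ℝ) (a b : ℂ) : ℝ :=
  A * ‖a‖ ^ 2 + B * ‖b‖ ^ 2 + 2 * c * (a * b).re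

noncomputable def tripletMass {n : Type*} [Fintype n] (A B c : ℝ) (X Y : Matrix n n ℂ) : ℝ :=
  A * (Xᴴ * X).trace.re + B * (Yᴴ * Y).trace.re + 2 * c * (X * Y).trace.re

section PositiveDefinite

variable {A B c : ℝ}

theorem sq_add_le_mul_pairForm (hA : 0 ≤ A) (a b : ℂ) :
    (A * ‖a‖ - |c| * ‖b‖) ^ 2 + (A * B - c ^ 2) * ‖b‖ ^ 2 ≤
      A * pairForm A B c a b := by
  have hre : |c * (a * b).re| ≤ |c| * (‖a‖ * ‖b‖) := by
    rw [abs_mul, ← norm_mul]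
    exact mul_le_mul_of_nonneg_left (Complex.abs_re_le_norm _) (abs_nonneg c)
  calc (A * ‖a‖ - |c| * ‖b‖) ^ 2 + (A * B - c ^ 2) * ‖b‖ ^ 2
      = A * (A * ‖a‖ ^ 2 + B * ‖b‖ ^ 2 - 2 * (|c| * (‖a‖ * ‖b‖))) := by
        rw [← sq_abs c]; ring
    _ ≤ A * pairForm A B c a b := by
      unfold pairForm
      exact mul_le_mul_of_nonneg_left (by linarith [neg_abs_le (c * (a * b).re)]) hA

theorem pos_of_sq_lt_mul (hA : 0 ≤ A) (hc : c ^ 2 < A * B) : 0 < A :=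
  hA.lt_of_ne (by rintro rfl; nlinarith [sq_nonneg c])

theorem pairForm_nonneg (hA : 0 ≤ A) (hc : c ^ 2 < A * B) (a b : ℂ) :
    0 ≤ pairForm A B c a b :=
  nonneg_of_mul_nonneg_right
    ((add_nonneg (sq_nonneg _) (mul_nonneg (sub_nonneg.mpr hc.le) (sq_nonneg _))).trans
      (sq_add_le_mul_pairForm hA a b)) (pos_of_sq_lt_mul hA hc)

theorem pairForm_eq_zero_iff (hA : 0 ≤ A) (hc : c ^ 2 < A * B) {a b : ℂ} :
    pairForm A B c a b = 0 ↔ a = 0 ∧ b = 0 := by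
  refine ⟨fun h => ?_, by rintro ⟨rfl, rfl⟩; simp [pairForm]⟩
  have hsq := sq_add_le_mul_pairForm (c := c) (B := B) hA a b
  rw [h, mul_zero] at hsq
  have hb : ‖b‖ = 0 := by
    have : (A * B - c ^ 2) * ‖b‖ ^ 2 ≤ (A * B - c ^ 2) * 0 := by
      linarith [sq_nonneg (A * ‖a‖ - |c| * ‖b‖)]
    exact pow_eq_zero_iff two_ne_zero |>.mp
      ((le_of_mul_le_mul_left this (sub_pos.mpr hc)).antisymm (sq_nonneg _))
  have ha : A * ‖a‖ = 0 := by
    rw [hb] at hsq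
    nlinarith [sq_nonneg (A * ‖a‖)]
  exact ⟨norm_eq_zero.mp ((mul_eq_zero.mp ha).resolve_left (pos_of_sq_lt_mul hA hc).ne'),
    norm_eq_zero.mp hb⟩

variable {n : Type*} [Fintype n]

theorem tripletMass_eq_sum (X Y : Matrix n n ℂ) :
    tripletMass A B c X Y = ∑ i, ∑ j, pairForm A B c (X i j) (Y j i) := by
  simp only [tripletMass, pairForm, trace, diag, mul_apply, conjTranspose_apply, Complex.re_sum,
    Finset.sum_add_distrib, Finset.mul_sum]
  rw [Finset.sum_comm (f := fun i j => A * (star (X j i) * X j i).re)]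
  simp [Complex.sq_norm, Complex.normSq_apply, Complex.mul_re]

theorem tripletMass_nonneg (hA : 0 ≤ A) (hc : c ^ 2 < A * B) (X Y : Matrix n n ℂ) :
    0 ≤ tripletMass A B c X Y := by
  rw [tripletMass_eq_sum]
  exact Fintype.sum_nonneg fun i => Fintype.sum_nonneg fun j => pairForm_nonneg hA hc _ _

theorem tripletMass_eq_zero_iff (hA : 0 ≤ A) (hc : c ^ 2 < A * B) {X Y : Matrix n n ℂ} :
    tripletMass A B c X Y = 0 ↔ X = 0 ∧ Y = 0 := by
  have h0 i j : 0 ≤ pairForm A B c (X i j) (Y j i) := pairForm_nonneg hA hc _ _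
  simp only [tripletMass_eq_sum, Finset.sum_eq_zero_iff_of_nonneg, Finset.mem_univ, forall_const,
    h0, Finset.sum_nonneg, implies_true, pairForm_eq_zero_iff hA hc, forall_and,
    ← Matrix.ext_iff, Matrix.zero_apply]
  exact and_congr_right' forall_comm

end PositiveDefinite

theorem PhiM_zero : PhiM 0 0 = 0 := by
  ext i j
  fin_cases i <;> fin_cases j <;> rfl

theorem tripletMass_add_tripletMass_add_pairForm_le_V0 (M1sq M2sq Mpsq Mphisq musq g g' : ℝ)
    (Δ Δbar Δc Δbarc : Matrix (Fin 2) (Fin 2) ℂ) (κ κ' : ℂ) :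
    tripletMass M1sq M2sq Mpsq Δ Δbar + tripletMass M1sq M2sq Mpsq Δc Δbarc
        + pairForm Mphisq Mphisq musq κ κ' ≤
      V0 M1sq M2sq Mpsq Mphisq musq g g' Δ Δbar Δc Δbarc κ κ' := by
  unfold V0
  refine le_add_of_le_of_nonneg (le_add_of_le_of_nonneg (le_add_of_le_of_nonneg
    (le_of_eq ?_) (by positivity)) (by positivity)) (by positivity)
  simp only [tripletMass, pairForm, Complex.add_re]
  ring

theorem V0_eq_zero_iff_trivial_general (M1 M2 Mpsq Mphisq musq g g' : ℝ)
    (h3 : 0 < Mphisq)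
    (h4 : |Mpsq| < M1 * M2) (h5 : |musq| < Mphisq) :
    ∀ (Δ Δbar Δc Δbarc : Matrix (Fin 2) (Fin 2) ℂ) (κ κ' : ℂ),
      V0 (M1 ^ 2) (M2 ^ 2) Mpsq Mphisq musq g g' Δ Δbar Δc Δbarc κ κ' = 0 ↔
        Δ = 0 ∧ Δbar = 0 ∧ Δc = 0 ∧ Δbarc = 0 ∧ κ = 0 ∧ κ' = 0 := by
  intro Δ Δbar Δc Δbarc κ κ'
  have hM : Mpsq ^ 2 < M1 ^ 2 * M2 ^ 2 :=
    mul_pow M1 M2 2 ▸ sq_lt_sq' (abs_lt.mp h4).1 (abs_lt.mp h4).2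
  have hμ : musq ^ 2 < Mphisq * Mphisq :=
    sq Mphisq ▸ sq_lt_sq' (abs_lt.mp h5).1 (abs_lt.mp h5).2
  have hT := tripletMass_nonneg (n := Fin 2) (sq_nonneg M1) hM
  have hP := pairForm_nonneg h3.le hμ κ κ'
  constructor
  · intro h
    have hle := tripletMass_add_tripletMass_add_pairForm_le_V0 (M1 ^ 2) (M2 ^ 2) Mpsq Mphisq
      musq g g' Δ Δbar Δc Δbarc κ κ'
    rw [h] at hle
    have hL := hT Δ Δbar
    have hR := hT Δc Δbarc
    obtain ⟨hΔ, hΔbar⟩ :=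
      (tripletMass_eq_zero_iff (X := Δ) (Y := Δbar) (sq_nonneg M1) hM).mp (by linarith)
    obtain ⟨hΔc, hΔbarc⟩ :=
      (tripletMass_eq_zero_iff (X := Δc) (Y := Δbarc) (sq_nonneg M1) hM).mp (by linarith)
    obtain ⟨hκ, hκ'⟩ := (pairForm_eq_zero_iff h3.le hμ).mp (by linarith)
    exact ⟨hΔ, hΔbar, hΔc, hΔbarc, hκ, hκ'⟩
  · rintro ⟨rfl, rfl, rfl, rfl, rfl, rfl⟩
    simp [V0, PhiM_zero]

/-- If `M₁ > 0`, `M₂ > 0`, `M_φ² > 0`, `|M′²| < M₁M₂` and `|μ²| < M_φ²`, then the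
tree-level Higgs potential (with `M₁², M₂²` the squares of `M₁, M₂`) vanishes exactly
at the trivial, parity-conserving configuration where all triplet and bidoublet fields
are zero; by nonnegativity this is the absolute minimum. -/
theorem V0_eq_zero_iff_trivial (M1 M2 Mpsq Mphisq musq g g' : ℝ)
    (h1 : 0 < M1) (h2 : 0 < M2) (h3 : 0 < Mphisq)
    (h4 : |Mpsq| < M1 * M2) (h5 : |musq| < Mphisq) :
    ∀ (Δ Δbar Δc Δbarc : Matrix (Fin 2) (Fin 2) ℂ) (κ κ' : ℂ),
      V0 (M1 ^ 2) (M2 ^ 2) Mpsq Mphisq musq g g' Δ Δbar Δc Δbarc κ κ' = 0 ↔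
        Δ = 0 ∧ Δbar = 0 ∧ Δc = 0 ∧ Δbarc = 0 ∧ κ = 0 ∧ κ' = 0 :=
  V0_eq_zero_iff_trivial_general M1 M2 Mpsq Mphisq musq g g' h3 h4 h5
end

section
/- Suppose M₁ > 0, M₂ > 0 (with M₁², M₂² in V₀ the squares of M₁, M₂), M′² = M₁·M₂ and μ² = M_φ². Then for every real v and every real κ, the nontrivial configuration Δ = Δc = (v/M₁)·τ₁, Δbar = Δbarc = −(v/M₂)·τ₁, κ′ = −κ satisfies V₀ = 0; i.e. on this hypersurface of the parameter space the potential has a flat direction of vacua with nonzero, electric-charge-violating but parity-conserving field values. -/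
open Matrix

/-! On the ansatz `Δ = Δc = a τ₁`, `Δbar = Δbarc = b τ₁`, `Φ = κ τ₃` every D-term is the
trace of a traceless Pauli matrix conjugated by a unitary one, hence zero, and the remaining
terms collapse to `4 (M₁² a² + M₂² b² + 2 M′² a b) + 2 (M_φ² − μ²) κ²`. On the hypersurface
this is `4 (M₁ a + M₂ b)²`, which `a = v/M₁`, `b = −v/M₂` makes vanish. -/

namespace Matrix

variable {n R : Type*} [Fintype n] [DecidableEq n] [CommRing R] [StarRing R]

theorem trace_conjTranspose_smul_mul_mul_smul {U : Matrix n n R} (hU : U ∈ unitary (Matrix n n R))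
    (c d : R) (B : Matrix n n R) :
    ((c • U)ᴴ * B * (d • U)).trace = star c * d * B.trace := by
  rw [conjTranspose_smul, smul_mul, Matrix.mul_smul, smul_mul, trace_smul, trace_smul,
    trace_mul_cycle, ← star_eq_conjTranspose, Unitary.mul_star_self_of_mem hU, one_mul,
    smul_eq_mul, smul_eq_mul]
  ring

theorem trace_smul_mul_mul_conjTranspose_smul {U : Matrix n n R} (hU : U ∈ unitary (Matrix n n R))
    (c d : R) (B : Matrix n n R) :
    ((c • U) * B * (d • U)ᴴ).trace = c * star d * B.trace := by
  rw [conjTranspose_smul, smul_mul, Matrix.mul_smul, smul_mul, trace_smul, trace_smul,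
    trace_mul_cycle, ← star_eq_conjTranspose, Unitary.star_mul_self_of_mem hU, one_mul,
    smul_eq_mul, smul_eq_mul]
  ring

theorem trace_conjTranspose_smul_mul_smul {U : Matrix n n R} (hU : U ∈ unitary (Matrix n n R))
    (c d : R) : ((c • U)ᴴ * (d • U)).trace = star c * d * Fintype.card n := by
  simpa using trace_conjTranspose_smul_mul_mul_smul hU c d 1

end Matrix

theorem pauli_isHermitian (m : Fin 3) : (pauli m).IsHermitian := by
  fin_cases m <;> ext i j <;> fin_cases i <;> fin_cases j <;> simp [pauli]

theorem pauli_mul_self (m : Fin 3) : pauli m * pauli m = 1 := by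
  fin_cases m <;> ext i j <;> fin_cases i <;> fin_cases j <;> simp [pauli]

theorem pauli_mem_unitary (m : Fin 3) : pauli m ∈ unitary (Matrix (Fin 2) (Fin 2) ℂ) := by
  rw [Unitary.mem_iff, star_eq_conjTranspose, (pauli_isHermitian m).eq, and_self]
  exact pauli_mul_self m

theorem trace_pauli (m : Fin 3) : (pauli m).trace = 0 := by
  fin_cases m <;> simp [pauli, trace_fin_two]

theorem PhiM_neg (κ : ℂ) : PhiM κ (-κ) = κ • pauli 2 := by
  ext i j; fin_cases i <;> fin_cases j <;> simp [PhiM, pauli]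

theorem trace_smul_pauli_mul_smul_pauli (c d : ℂ) (m : Fin 3) :
    (c • pauli m * d • pauli m).trace = 2 * c * d := by
  rw [smul_mul_smul_comm, pauli_mul_self, trace_smul, trace_one]
  simp only [Fintype.card_fin, Nat.cast_ofNat, smul_eq_mul]
  ring

theorem V0_pauli_ansatz (M1sq M2sq Mpsq Mphisq musq g g' a b κ : ℝ) :
    V0 M1sq M2sq Mpsq Mphisq musq g g' ((a : ℂ) • pauli 0) ((b : ℂ) • pauli 0)
        ((a : ℂ) • pauli 0) ((b : ℂ) • pauli 0) (κ : ℂ) (-(κ : ℂ)) =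
      4 * (M1sq * a ^ 2 + M2sq * b ^ 2 + 2 * Mpsq * a * b) + 2 * (Mphisq - musq) * κ ^ 2 := by
  simp only [V0, PhiM_neg, trace_add, trace_smul, trace_transpose, trace_pauli,
    trace_conjTranspose_smul_mul_mul_smul (pauli_mem_unitary _),
    trace_smul_mul_mul_conjTranspose_smul (pauli_mem_unitary _),
    trace_conjTranspose_smul_mul_smul (pauli_mem_unitary _), trace_smul_pauli_mul_smul_pauli]
  simp only [RCLike.star_def, Complex.conj_ofReal, Fintype.card_fin, Nat.cast_ofNat,
    Complex.add_re, Complex.mul_re, Complex.ofReal_re, Complex.ofReal_im, mul_zero, sub_zero,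
    Complex.re_ofNat, Complex.mul_im, zero_mul, add_zero, Complex.im_ofNat, Complex.norm_real,
    Real.norm_eq_abs, sq_abs, norm_neg, mul_neg, Complex.neg_re, smul_eq_mul, norm_zero, ne_eq,
    OfNat.ofNat_ne_zero, not_false_eq_true, zero_pow, Finset.sum_const_zero, sub_self, zero_sub,
    neg_add_cancel]
  ring

/-- On the hypersurface `M′² = M₁M₂`, `μ² = M_φ²` of the parameter space (with
`M₁ > 0`, `M₂ > 0` and `M₁², M₂²` the squares of `M₁, M₂`), for every real `v` and `κ`
the nontrivial, electric-charge-violating but parity-conserving configuration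
`Δ = Δc = (v/M₁)τ₁`, `Δbar = Δbarc = −(v/M₂)τ₁`, `κ' = −κ` satisfies `V₀ = 0`:
the potential has a flat direction of vacua. -/
theorem V0_flat_vacua_on_hypersurface (M1 M2 Mphisq g g' : ℝ)
    (h1 : 0 < M1) (h2 : 0 < M2) :
    ∀ v κ : ℝ,
      V0 (M1 ^ 2) (M2 ^ 2) (M1 * M2) Mphisq Mphisq g g'
        (((v / M1 : ℝ) : ℂ) • pauli 0) ((-(v / M2 : ℝ) : ℂ) • pauli 0)
        (((v / M1 : ℝ) : ℂ) • pauli 0) ((-(v / M2 : ℝ) : ℂ) • pauli 0)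
        (κ : ℂ) (-(κ : ℂ)) = 0 := by
  intro v κ
  rw [← Complex.ofReal_neg, V0_pauli_ansatz]
  field_simp
  ring
end

section
/- Assume v² − 4f²m_l² > 0, M² < M₂² and h ≠ 0. Let V_PBS := −f²·(1 − M²/M₂²)·L² with L := (v² − 4f²m_l²)·M₂²/(8f⁴·(M₂² − M²)) be the value of V₁ at the parity-breaking critical point, and let V_PPS := −2·(f²·(1 − M²/M₂²) + h²/2)·K² with K := (v² − 4f²m_l²)·M₂²/(8f⁴·(M₂²·(1 + h²/(2f²)) − M²)) be the value of V₁ at the parity-preserving critical point. Then V_PBS < V_PPS if and only if h²·M₂² > 2·f²·(M₂² − M²). In particular, for h²·M₂² > 2f²(M₂² − M²) the parity-breaking solution lies lower than the parity-preserving one. -/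
/-- The simplified tree-level Higgs potential of the minimal SUSY left-right model in
the limit of small gauge and bidoublet couplings, with all fields real:
`V₁(l, l', δ, δ', δbar, δbar') = m_l²(l'² + l²) + M₂²(δbar'² + δbar²) + f²(l'⁴ + l⁴)
 + 4f²(l'²δ'² + l²δ²) + h²l'²l² + 2v(l'²δ' + l²δ) + 2fM(l'²δbar' + l²δbar)`. -/
noncomputable def V1 (mlsq M2 f M v h : ℝ) (l l' δ δ' δbar δbar' : ℝ) : ℝ :=
  mlsq * (l' ^ 2 + l ^ 2) + M2 ^ 2 * (δbar' ^ 2 + δbar ^ 2) + f ^ 2 * (l' ^ 4 + l ^ 4)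
  + 4 * f ^ 2 * (l' ^ 2 * δ' ^ 2 + l ^ 2 * δ ^ 2) + h ^ 2 * l' ^ 2 * l ^ 2
  + 2 * v * (l' ^ 2 * δ' + l ^ 2 * δ) + 2 * f * M * (l' ^ 2 * δbar' + l ^ 2 * δbar)

/-!
Writing `A = v² − 4f²m_l²`, `D = M₂² − M²` and `c = A²M₂²/(16f⁴)`, both critical values are
negative multiples of `c`: `V_PBS = −c/(4f²D)` and `V_PPS = −c/(2f²D + h²M₂²)`. Hence
`V_PBS < V_PPS` exactly when `4f²D < 2f²D + h²M₂²`.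
-/

section CriticalValues

variable {M2 f M h : ℝ}

theorem parityBreaking_value_eq (a : ℝ) (hf : f ≠ 0) (hM2 : M2 ≠ 0) :
    -f ^ 2 * (1 - M ^ 2 / M2 ^ 2) * (a * M2 ^ 2 / (8 * f ^ 4 * (M2 ^ 2 - M ^ 2))) ^ 2 =
      -(a ^ 2 * M2 ^ 2 / (16 * f ^ 4)) / (4 * f ^ 2 * (M2 ^ 2 - M ^ 2)) := by
  field_simp
  ring

theorem parityPreserving_value_eq (a : ℝ) (hf : f ≠ 0) (hM2 : M2 ≠ 0) :
    -2 * (f ^ 2 * (1 - M ^ 2 / M2 ^ 2) + h ^ 2 / 2) *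
        (a * M2 ^ 2 / (8 * f ^ 4 * (M2 ^ 2 * (1 + h ^ 2 / (2 * f ^ 2)) - M ^ 2))) ^ 2 =
      -(a ^ 2 * M2 ^ 2 / (16 * f ^ 4)) / (2 * f ^ 2 * (M2 ^ 2 - M ^ 2) + h ^ 2 * M2 ^ 2) := by
  have hdenom : M2 ^ 2 * (1 + h ^ 2 / (2 * f ^ 2)) - M ^ 2 =
      (2 * f ^ 2 * (M2 ^ 2 - M ^ 2) + h ^ 2 * M2 ^ 2) / (2 * f ^ 2) := by
    field_simp
    ring
  rw [hdenom]
  field_simp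
  ring

end CriticalValues

theorem neg_div_lt_neg_div_iff {a b c : ℝ} (hc : 0 < c) (ha : 0 < a) (hb : 0 < b) :
    -c / a < -c / b ↔ a < b := by
  rw [neg_div, neg_div, neg_lt_neg_iff, div_lt_div_iff_of_pos_left hc hb ha]

theorem parity_breaking_below_parity_preserving_iff_general (mlsq M2 f M v h L K VPBS VPPS : ℝ)
    (hf : f ≠ 0) (hM2 : 0 < M2)
    (hpos : 0 < v ^ 2 - 4 * f ^ 2 * mlsq) (hMM : M ^ 2 < M2 ^ 2)
    (hL : L = (v ^ 2 - 4 * f ^ 2 * mlsq) * M2 ^ 2 / (8 * f ^ 4 * (M2 ^ 2 - M ^ 2)))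
    (hK : K = (v ^ 2 - 4 * f ^ 2 * mlsq) * M2 ^ 2 /
      (8 * f ^ 4 * (M2 ^ 2 * (1 + h ^ 2 / (2 * f ^ 2)) - M ^ 2)))
    (hVPBS : VPBS = -f ^ 2 * (1 - M ^ 2 / M2 ^ 2) * L ^ 2)
    (hVPPS : VPPS = -2 * (f ^ 2 * (1 - M ^ 2 / M2 ^ 2) + h ^ 2 / 2) * K ^ 2) :
    VPBS < VPPS ↔ h ^ 2 * M2 ^ 2 > 2 * f ^ 2 * (M2 ^ 2 - M ^ 2) := by
  have hD : 0 < M2 ^ 2 - M ^ 2 := sub_pos.mpr hMM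
  have hG : 0 < 2 * f ^ 2 * (M2 ^ 2 - M ^ 2) + h ^ 2 * M2 ^ 2 := by positivity
  rw [hVPBS, hL, parityBreaking_value_eq _ hf hM2.ne', hVPPS, hK,
    parityPreserving_value_eq _ hf hM2.ne', neg_div_lt_neg_div_iff (by positivity)
      (by positivity) hG]
  constructor <;> intro <;> linarith

/-- Comparison of the two critical values: with
`V_PBS = −f²(1 − M²/M₂²)L²`, `L = (v² − 4f²m_l²)M₂²/(8f⁴(M₂² − M²))`, and
`V_PPS = −2(f²(1 − M²/M₂²) + h²/2)K²`,
`K = (v² − 4f²m_l²)M₂²/(8f⁴(M₂²(1 + h²/(2f²)) − M²))`, one has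
`V_PBS < V_PPS ↔ h²M₂² > 2f²(M₂² − M²)`: the parity-breaking solution lies lower than
the parity-preserving one exactly when `h²M₂² > 2f²(M₂² − M²)`. -/
theorem parity_breaking_below_parity_preserving_iff (mlsq M2 f M v h L K VPBS VPPS : ℝ)
    (hf : f ≠ 0) (hM2 : 0 < M2) (hh : h ≠ 0)
    (hpos : 0 < v ^ 2 - 4 * f ^ 2 * mlsq) (hMM : M ^ 2 < M2 ^ 2)
    (hL : L = (v ^ 2 - 4 * f ^ 2 * mlsq) * M2 ^ 2 / (8 * f ^ 4 * (M2 ^ 2 - M ^ 2)))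
    (hK : K = (v ^ 2 - 4 * f ^ 2 * mlsq) * M2 ^ 2 /
      (8 * f ^ 4 * (M2 ^ 2 * (1 + h ^ 2 / (2 * f ^ 2)) - M ^ 2)))
    (hVPBS : VPBS = -f ^ 2 * (1 - M ^ 2 / M2 ^ 2) * L ^ 2)
    (hVPPS : VPPS = -2 * (f ^ 2 * (1 - M ^ 2 / M2 ^ 2) + h ^ 2 / 2) * K ^ 2) :
    VPBS < VPPS ↔ h ^ 2 * M2 ^ 2 > 2 * f ^ 2 * (M2 ^ 2 - M ^ 2) :=
  parity_breaking_below_parity_preserving_iff_general mlsq M2 f M v h L K VPBS VPPS hf hM2 hpos hMM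
    hL hK hVPBS hVPPS
end
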